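/- arXiv:2310.08385 — 3 statements merged into one kernel-verified Lean document; each statement's English description precedes it below -/
import Mathlib

section
/- Let B = A⁻¹ where A is an n×n lower triangular complex matrix with diagonal entries 1 and all subdiagonal entries of absolute value at most 1. Then |B_{j,k}| ≤ 2^{j−k−1} for all 1 ≤ k < j ≤ n. -/
/-!
Write `B = A⁻¹`; it is again lower unitriangular, and comparing the `(j, k)` entries of
`A * B = 1` gives `B j k = -∑_{k ≤ i < j} A j i * B i k`. Since `‖A j i‖ ≤ 1`, strong
induction on `j` bounds `‖B j k‖` by `1 + ∑_{k < i < j} 2 ^ (i - k - 1) = 2 ^ (j - k - 1)`.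
-/

open Finset Matrix

theorem Nat.one_add_sum_Ioo_two_pow (a b : ℕ) :
    1 + ∑ i ∈ Ioo a b, (2 : ℝ) ^ (i - a - 1) = 2 ^ (b - a - 1) := by
  rw [← Ico_add_one_left_eq_Ioo, sum_Ico_eq_sum_range]
  have hsum : ∑ i ∈ range (b - (a + 1)), (2 : ℝ) ^ (a + 1 + i - a - 1)
      = ∑ i ∈ range (b - a - 1), (2 : ℝ) ^ i :=
    sum_congr (by rw [Nat.sub_sub, Nat.add_comm]) fun i _ => by congr 1; omega
  rw [hsum, geom_sum_eq (by norm_num)]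
  ring

theorem Fin.one_add_sum_Ioo_two_pow {n : ℕ} (k j : Fin n) :
    1 + ∑ i ∈ Ioo k j, (2 : ℝ) ^ ((i : ℕ) - k - 1) = 2 ^ ((j : ℕ) - k - 1) := by
  rw [← Nat.one_add_sum_Ioo_two_pow, ← Fin.map_valEmbedding_Ioo, sum_map]
  rfl

namespace Matrix

variable {ι R : Type*} [Fintype ι] [LinearOrder ι] [CommRing R] {A : Matrix ι ι R}

theorem det_eq_one_of_isLowerTriangular (hA : A.IsLowerTriangular) (hdiag : ∀ i, A i i = 1) :
    A.det = 1 := by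
  simp [det_of_isLowerTriangular A hA, hdiag]

theorem inv_apply_self_of_isLowerTriangular (hA : A.IsLowerTriangular) (hdiag : ∀ i, A i i = 1)
    (k : ι) : A⁻¹ k k = 1 := by
  have : Invertible A :=
    A.invertibleOfIsUnitDet (det_eq_one_of_isLowerTriangular hA hdiag ▸ isUnit_one)
  have hB : A⁻¹.IsLowerTriangular := blockTriangular_inv_of_blockTriangular hA
  have hkk := congrFun (congrFun (mul_inv_of_invertible A) k) k
  rw [mul_apply, one_apply_eq, sum_eq_single k ?_ (by simp), hdiag, one_mul] at hkk
  · exact hkk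
  intro i _ hik
  rcases lt_or_gt_of_ne hik with hlt | hgt
  · rw [hB hlt, mul_zero]
  · rw [hA hgt, zero_mul]

theorem inv_apply_eq_neg_sum_of_isLowerTriangular [LocallyFiniteOrder ι]
    (hA : A.IsLowerTriangular) (hdiag : ∀ i, A i i = 1) {j k : ι} (hkj : k < j) :
    A⁻¹ j k = -∑ i ∈ Ico k j, A j i * A⁻¹ i k := by
  have : Invertible A :=
    A.invertibleOfIsUnitDet (det_eq_one_of_isLowerTriangular hA hdiag ▸ isUnit_one)
  have hB : A⁻¹.IsLowerTriangular := blockTriangular_inv_of_blockTriangular hA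
  have hjk := congrFun (congrFun (mul_inv_of_invertible A) j) k
  rw [mul_apply, one_apply_ne hkj.ne', ← sum_subset (subset_univ (Icc k j)),
    ← Ico_insert_right hkj.le, sum_insert (by simp), hdiag, one_mul] at hjk
  · exact eq_neg_of_add_eq_zero_left hjk
  intro i _ hi
  rcases not_and_or.mp (mt mem_Icc.mpr hi) with hik | hji
  · rw [hB (not_le.mp hik), mul_zero]
  · rw [hA (not_le.mp hji), zero_mul]

end Matrix

theorem Matrix.norm_inv_apply_le_two_pow {n : ℕ} {R : Type*} [NormedCommRing R] [NormOneClass R]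
    {A : Matrix (Fin n) (Fin n) R} (hA : A.IsLowerTriangular) (hdiag : ∀ i, A i i = 1)
    (hbd : ∀ j k, k < j → ‖A j k‖ ≤ 1) {j k : Fin n} (hkj : k < j) :
    ‖A⁻¹ j k‖ ≤ 2 ^ ((j : ℕ) - k - 1) := by
  induction j using WellFoundedLT.induction with
  | ind j ih =>
  calc ‖A⁻¹ j k‖ = ‖∑ i ∈ Ico k j, A j i * A⁻¹ i k‖ := by
        rw [inv_apply_eq_neg_sum_of_isLowerTriangular hA hdiag hkj, norm_neg]
    _ ≤ ∑ i ∈ Ico k j, ‖A⁻¹ i k‖ := by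
        refine (norm_sum_le _ _).trans (sum_le_sum fun i hi => ?_)
        refine (norm_mul_le _ _).trans (mul_le_of_le_one_left (norm_nonneg _) ?_)
        exact hbd j i (mem_Ico.mp hi).2
    _ = 1 + ∑ i ∈ Ioo k j, ‖A⁻¹ i k‖ := by
        rw [← Ioo_insert_left hkj, sum_insert (by simp),
          inv_apply_self_of_isLowerTriangular hA hdiag, norm_one]
    _ ≤ 1 + ∑ i ∈ Ioo k j, (2 : ℝ) ^ ((i : ℕ) - k - 1) := by
        gcongr with i hi
        exact ih i (mem_Ioo.mp hi).2 (mem_Ioo.mp hi).1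
    _ = 2 ^ ((j : ℕ) - k - 1) := Fin.one_add_sum_Ioo_two_pow k j

theorem stmt_10 (n : ℕ) (A : Matrix (Fin n) (Fin n) ℂ)
    (hlow : ∀ j k : Fin n, j < k → A j k = 0)
    (hdiag : ∀ j : Fin n, A j j = 1)
    (hbd : ∀ j k : Fin n, k < j → ‖A j k‖ ≤ 1) :
    ∀ j k : Fin n, k < j → ‖A⁻¹ j k‖ ≤ (2 : ℝ) ^ ((j : ℕ) - (k : ℕ) - 1) :=
  fun _ _ hkj => norm_inv_apply_le_two_pow (fun j k h => hlow j k h) hdiag hbd hkj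
end

section
/- Let A be an n×n complex lower triangular matrix with diagonal entries 1 and subdiagonal entries of absolute value at most 1, viewed as a linear map on ℂⁿ. Then (1/(2ⁿ−1))𝔻ⁿ ⊆ A(Δⁿ), where Δⁿ = {w ∈ ℂⁿ : |w₁|+⋯+|wₙ| < 1} and 𝔻ⁿ is the unit polydisc. -/
/-!
Write `Z = A w`. Since `A` is unit lower triangular, forward substitution gives
`w j = Z j - ∑_{k < j} A j k * w k`, so with `‖A j k‖ ≤ 1` and `‖Z k‖ ≤ ‖Z‖` (sup norm) an
induction yields `‖w j‖ ≤ 2 ^ j * ‖Z‖`. Summing, `∑ j ‖w j‖ ≤ (2 ^ n - 1) * ‖Z‖ < 1`.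
-/

open Finset

lemma Fin.sum_Iio_two_pow {n : ℕ} (j : Fin n) :
    ∑ k ∈ Iio j, (2 : ℝ) ^ (k : ℕ) = 2 ^ (j : ℕ) - 1 := by
  have := sum_map (Iio j) Fin.valEmbedding (fun k => (2 : ℝ) ^ k)
  rw [Fin.map_valEmbedding_Iio, Nat.Iio_eq_range, geom_sum_eq (by norm_num)] at this
  norm_num at this
  exact this.symm

lemma Fin.sum_univ_two_pow (n : ℕ) : ∑ k : Fin n, (2 : ℝ) ^ (k : ℕ) = 2 ^ n - 1 := by
  rw [Fin.sum_univ_eq_sum_range (fun k => (2 : ℝ) ^ k), geom_sum_eq (by norm_num)]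
  norm_num

namespace Matrix

lemma mulVec_apply_eq_add_sum_Iio {ι R : Type*} [Fintype ι] [LinearOrder ι]
    [LocallyFiniteOrderBot ι] [Semiring R] {A : Matrix ι ι R} (hA : A.IsLowerTriangular)
    (hdiag : ∀ j, A j j = 1) (w : ι → R) (j : ι) :
    (A *ᵥ w) j = w j + ∑ k ∈ Iio j, A j k * w k := by
  have hsupp : ∑ k, A j k * w k = ∑ k ∈ Iic j, A j k * w k :=
    (sum_subset (subset_univ _) fun k _ hk => by
      rw [hA (by simpa using hk), zero_mul]).symm
  rw [mulVec, dotProduct, hsupp, ← Iio_insert, sum_insert (by simp), hdiag, one_mul]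

lemma mulVec_surjective_of_isLowerTriangular {ι R : Type*} [Fintype ι] [DecidableEq ι]
    [LinearOrder ι] [CommRing R] {A : Matrix ι ι R} (hA : A.IsLowerTriangular)
    (hdiag : ∀ j, A j j = 1) : Function.Surjective A.mulVec := by
  rw [mulVec_surjective_iff_isUnit, isUnit_iff_isUnit_det, det_of_isLowerTriangular A hA]
  simp [hdiag]

variable {𝕜 : Type*} [SeminormedRing 𝕜] {n : ℕ} {A : Matrix (Fin n) (Fin n) 𝕜}

lemma norm_le_two_pow_mul_norm_mulVec (hA : A.IsLowerTriangular) (hdiag : ∀ j, A j j = 1)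
    (hbd : ∀ j k, k < j → ‖A j k‖ ≤ 1) (w : Fin n → 𝕜) (j : Fin n) :
    ‖w j‖ ≤ 2 ^ (j : ℕ) * ‖A *ᵥ w‖ := by
  induction j using WellFoundedLT.induction with
  | ind j ih =>
    have hsubst : w j = (A *ᵥ w) j - ∑ k ∈ Iio j, A j k * w k := by
      rw [mulVec_apply_eq_add_sum_Iio hA hdiag, add_sub_cancel_right]
    have hterm : ∀ k ∈ Iio j, ‖A j k * w k‖ ≤ 2 ^ (k : ℕ) * ‖A *ᵥ w‖ := fun k hk => by
      have hkj : k < j := mem_Iio.mp hk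
      calc ‖A j k * w k‖ ≤ ‖A j k‖ * ‖w k‖ := norm_mul_le _ _
        _ ≤ 1 * (2 ^ (k : ℕ) * ‖A *ᵥ w‖) :=
          mul_le_mul (hbd j k hkj) (ih k hkj) (norm_nonneg _) zero_le_one
        _ = 2 ^ (k : ℕ) * ‖A *ᵥ w‖ := one_mul _
    calc ‖w j‖ ≤ ‖(A *ᵥ w) j‖ + ∑ k ∈ Iio j, ‖A j k * w k‖ := by
          rw [hsubst]
          exact (norm_sub_le _ _).trans (add_le_add_right (norm_sum_le _ _) _)
      _ ≤ ‖A *ᵥ w‖ + ∑ k ∈ Iio j, 2 ^ (k : ℕ) * ‖A *ᵥ w‖ :=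
          add_le_add (norm_le_pi_norm _ j) (sum_le_sum hterm)
      _ = 2 ^ (j : ℕ) * ‖A *ᵥ w‖ := by
          rw [← sum_mul, Fin.sum_Iio_two_pow]
          ring

lemma sum_norm_le_mul_norm_mulVec (hA : A.IsLowerTriangular) (hdiag : ∀ j, A j j = 1)
    (hbd : ∀ j k, k < j → ‖A j k‖ ≤ 1) (w : Fin n → 𝕜) :
    ∑ j, ‖w j‖ ≤ (2 ^ n - 1) * ‖A *ᵥ w‖ :=
  calc ∑ j, ‖w j‖ ≤ ∑ j : Fin n, 2 ^ (j : ℕ) * ‖A *ᵥ w‖ :=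
        sum_le_sum fun j _ => norm_le_two_pow_mul_norm_mulVec hA hdiag hbd w j
    _ = (2 ^ n - 1) * ‖A *ᵥ w‖ := by rw [← sum_mul, Fin.sum_univ_two_pow]

end Matrix

theorem stmt_11 (n : ℕ) (A : Matrix (Fin n) (Fin n) ℂ)
    (hlow : ∀ j k : Fin n, j < k → A j k = 0)
    (hdiag : ∀ j : Fin n, A j j = 1)
    (hbd : ∀ j k : Fin n, k < j → ‖A j k‖ ≤ 1) :
    {Z : Fin n → ℂ | ∀ j, ‖Z j‖ < 1 / ((2 : ℝ) ^ n - 1)} ⊆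
      A.mulVec '' {w : Fin n → ℂ | ∑ j, ‖w j‖ < 1} := by
  have hA : A.IsLowerTriangular := fun j k h => hlow j k h
  intro Z hZ
  obtain ⟨w, rfl⟩ := Matrix.mulVec_surjective_of_isLowerTriangular hA hdiag Z
  refine ⟨w, ?_, rfl⟩
  refine (Matrix.sum_norm_le_mul_norm_mulVec hA hdiag hbd w).trans_lt ?_
  rcases n.eq_zero_or_pos with rfl | hn
  · norm_num
  have hpos : (0 : ℝ) < 2 ^ n - 1 := sub_pos.mpr (one_lt_pow₀ one_lt_two hn.ne')
  have hnorm : ‖A.mulVec w‖ < 1 / (2 ^ n - 1) := (pi_norm_lt_iff (by positivity)).mpr hZ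
  rwa [lt_div_iff₀ hpos, mul_comm] at hnorm
end

section
/- Let A be an n×n complex lower triangular matrix with diagonal entries 1 and subdiagonal entries of absolute value at most 1. Set c_n = √(4ⁿ−1)/√3. Then (1/c_n)𝔹ⁿ ⊆ A(Δⁿ), where Δⁿ = {w ∈ ℂⁿ : |w₁|+⋯+|wₙ| < 1} and 𝔹ⁿ is the open Euclidean unit ball in ℂⁿ. -/
/-!
Since `A` is unit lower triangular, `A w = Z` is solved by forward substitution,
`w j = Z j - ∑_{k<j} A j k * w k`. As the subdiagonal entries have norm at most one,
`‖w j‖ ≤ ‖Z j‖ + ∑_{k<j} ‖w k‖`, so each partial sum of the `‖w k‖` is at most `‖Z j‖` plus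
twice the previous one, and `∑ ‖w j‖ ≤ ∑ 2 ^ (n - 1 - k) ‖Z k‖`. By Cauchy–Schwarz the right
side is at most `c_n ‖Z‖`, with `c_n² = ∑_{k<n} 4 ^ k = (4 ^ n - 1) / 3`.
-/

open Finset Matrix

section UnitLowerTriangular

variable {R ι : Type*} [Fintype ι] [LinearOrder ι]

theorem Matrix.isUnit_of_isLowerTriangular_of_diag_eq_one [CommRing R] [DecidableEq ι]
    {A : Matrix ι ι R} (hlow : A.IsLowerTriangular) (hdiag : ∀ j, A j j = 1) : IsUnit A := by
  rw [isUnit_iff_isUnit_det, det_of_isLowerTriangular A hlow]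
  simp [hdiag]

variable [LocallyFiniteOrderBot ι]

theorem Matrix.mulVec_apply_eq_add_sum_Iio_s12 [Semiring R] {A : Matrix ι ι R}
    (hlow : A.IsLowerTriangular) (hdiag : ∀ j, A j j = 1) (w : ι → R) (j : ι) :
    (A *ᵥ w) j = w j + ∑ k ∈ Iio j, A j k * w k := by
  have hupper : ∑ k ∈ Iic j, A j k * w k = ∑ k, A j k * w k :=
    sum_subset (subset_univ _) fun k _ hk ↦ by
      rw [hlow (OrderDual.toDual_lt_toDual.mpr (not_le.mp (mem_Iic.not.mp hk))), zero_mul]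
  rw [mulVec, dotProduct, ← hupper, ← Iio_insert, sum_insert notMem_Iio_self, hdiag, one_mul]

theorem Matrix.norm_le_norm_mulVec_add_sum_Iio [SeminormedRing R] {A : Matrix ι ι R}
    (hlow : A.IsLowerTriangular) (hdiag : ∀ j, A j j = 1) (hbd : ∀ j k, k < j → ‖A j k‖ ≤ 1)
    (w : ι → R) (j : ι) :
    ‖w j‖ ≤ ‖(A *ᵥ w) j‖ + ∑ k ∈ Iio j, ‖w k‖ := by
  have hw : w j = (A *ᵥ w) j - ∑ k ∈ Iio j, A j k * w k := by
    rw [mulVec_apply_eq_add_sum_Iio_s12 hlow hdiag, add_sub_cancel_right]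
  calc ‖w j‖ ≤ ‖(A *ᵥ w) j‖ + ‖∑ k ∈ Iio j, A j k * w k‖ := hw ▸ norm_sub_le _ _
    _ ≤ ‖(A *ᵥ w) j‖ + ∑ k ∈ Iio j, ‖w k‖ := by
      gcongr
      refine (norm_sum_le _ _).trans (sum_le_sum fun k hk ↦ ?_)
      exact (norm_mul_le _ _).trans
        (mul_le_of_le_one_left (norm_nonneg _) (hbd j k (mem_Iio.mp hk)))

end UnitLowerTriangular

theorem Fin.sum_le_sum_two_pow_rev_mul {R : Type*} [CommRing R] [LinearOrder R]
    [IsStrictOrderedRing R] {n : ℕ} (a b : Fin n → R) (h : ∀ j, a j ≤ b j + ∑ k ∈ Iio j, a k) :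
    ∑ j, a j ≤ ∑ j, 2 ^ (j.rev : ℕ) * b j := by
  induction n with
  | zero => simp
  | succ n ih =>
    have hinit : ∑ j : Fin n, a j.castSucc ≤ ∑ j : Fin n, 2 ^ (j.rev : ℕ) * b j.castSucc :=
      ih _ _ fun j ↦ by
        simpa only [Iio_castSucc, sum_map, coe_castSuccEmb] using h j.castSucc
    have hlast : a (last n) ≤ b (last n) + ∑ j : Fin n, a j.castSucc := by
      simpa only [Iio_last_eq_map, sum_map, coe_castSuccEmb] using h (last n)
    simp only [sum_univ_castSucc, rev_castSucc, val_succ, rev_last, val_zero, pow_succ,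
      pow_zero, one_mul, mul_comm _ (2 : R), mul_assoc, ← mul_sum]
    linarith

theorem Fin.sum_two_pow_rev_sq (n : ℕ) :
    ∑ k : Fin n, ((2 : ℝ) ^ (k.rev : ℕ)) ^ 2 = (4 ^ n - 1) / 3 := by
  rw [Fintype.sum_equiv revPerm _ (fun k ↦ (4 : ℝ) ^ (k : ℕ)) fun k ↦ by
      rw [← pow_mul, pow_mul']; norm_num,
    sum_univ_eq_sum_range (fun k ↦ (4 : ℝ) ^ k), geom_sum_eq (by norm_num)]
  norm_num

theorem stmt_12 (n : ℕ) (A : Matrix (Fin n) (Fin n) ℂ)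
    (hlow : ∀ j k : Fin n, j < k → A j k = 0)
    (hdiag : ∀ j : Fin n, A j j = 1)
    (hbd : ∀ j k : Fin n, k < j → ‖A j k‖ ≤ 1) :
    {Z : Fin n → ℂ | Real.sqrt (∑ j, ‖Z j‖ ^ 2) < 1 / (Real.sqrt (4 ^ n - 1) / Real.sqrt 3)} ⊆
      A.mulVec '' {w : Fin n → ℂ | ∑ j, ‖w j‖ < 1} := by
  have hA : A.IsLowerTriangular := fun _ _ h ↦ hlow _ _ (OrderDual.toDual_lt_toDual.mp h)
  intro Z hZ
  obtain ⟨w, rfl⟩ := mulVec_surjective_iff_isUnit.mpr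
    (isUnit_of_isLowerTriangular_of_diag_eq_one hA hdiag) Z
  refine ⟨w, ?_, rfl⟩
  set c := Real.sqrt (4 ^ n - 1) / Real.sqrt 3
  have hc : Real.sqrt (∑ k : Fin n, ((2 : ℝ) ^ (k.rev : ℕ)) ^ 2) = c := by
    rw [Fin.sum_two_pow_rev_sq, Real.sqrt_div' _ (by norm_num)]
  calc ∑ j, ‖w j‖ ≤ ∑ j, 2 ^ (j.rev : ℕ) * ‖(A *ᵥ w) j‖ :=
        Fin.sum_le_sum_two_pow_rev_mul _ _ (norm_le_norm_mulVec_add_sum_Iio hA hdiag hbd w)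
    _ ≤ c * Real.sqrt (∑ j, ‖(A *ᵥ w) j‖ ^ 2) := hc ▸ Real.sum_mul_le_sqrt_mul_sqrt _ _ _
    _ < 1 := by
      rcases (by positivity : 0 ≤ c).eq_or_lt with hc0 | hcpos
      · rw [← hc0, zero_mul]
        exact one_pos
      · rwa [Set.mem_ofPred_eq, lt_div_iff₀ hcpos, mul_comm] at hZ
end
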